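/- arXiv:2201.02446 — 3 statements merged into one kernel-verified Lean document; each statement's English description precedes it below -/
import Mathlib

section
/- Let E be a directed graph, (H, S) an admissible pair (H hereditary and saturated, S ⊆ B_H), and E/(H,S) the quotient graph. Then the following are equivalent: (1) E⁰ − H is downwards directed and has ICSP, and S equals B_H or B_H − {u} for a vertex u ∈ B_H with E⁰ − H = R(u); (2) the vertex set of E/(H,S) is downwards directed and has CSP. -/
/-- A directed graph with vertex set `V`, edge set `E`, source map `s` and range map `r`. -/
structure DiGraph where
  V : Type
  E : Type
  s : E → V
  r : E → V

namespace DiGraph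

variable (G : DiGraph)

/-- There is an edge from `u` to `w`. -/
def Step (u w : G.V) : Prop := ∃ e : G.E, G.s e = u ∧ G.r e = w

/-- `G.Reach u w` means `u ≥ w`: there is a (possibly trivial) directed path from `u` to `w`. -/
def Reach (u w : G.V) : Prop := Relation.ReflTransGen G.Step u w

/-- The root `R(W)` of a set of vertices `W`. -/
def root (W : Set G.V) : Set G.V := {u | ∃ w ∈ W, G.Reach u w}

/-- A set `H` of vertices is hereditary if `u ∈ H` and `u ≥ w` imply `w ∈ H`. -/
def Hereditary (H : Set G.V) : Prop := ∀ u ∈ H, ∀ w, G.Reach u w → w ∈ H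

/-- A vertex is regular if it emits at least one and only finitely many edges. -/
def Regular (v : G.V) : Prop := (G.s ⁻¹' {v}).Nonempty ∧ (G.s ⁻¹' {v}).Finite

/-- A set `H` is saturated if every regular vertex all of whose out-edges
have ranges in `H` lies in `H`. -/
def Saturated (H : Set G.V) : Prop :=
  ∀ v, G.Regular v → (∀ e, G.s e = v → G.r e ∈ H) → v ∈ H

/-- A set of vertices is downwards directed if every two of its elements have a
common lower bound in it. -/
def DownDirected (W : Set G.V) : Prop :=
  ∀ u ∈ W, ∀ v ∈ W, ∃ w ∈ W, G.Reach u w ∧ G.Reach v w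

/-- The Countable Separation Property of a set of vertices. -/
def CSP (W : Set G.V) : Prop := ∃ C : Set G.V, C.Countable ∧ W ⊆ G.root C

/-- The Inner Countable Separation Property of a set of vertices. -/
def ICSP (W : Set G.V) : Prop := ∃ C : Set G.V, C.Countable ∧ C ⊆ W ∧ W ⊆ G.root C

/-- `G.IsPathFrom v l` : the list of edges `l` forms a directed path starting at `v`. -/
def IsPathFrom : (G : DiGraph) → G.V → List G.E → Prop
  | _, _, [] => True
  | G, v, e :: es => G.s e = v ∧ G.IsPathFrom (G.r e) es

/-- The end (range) vertex of a path `l` starting at `v`. -/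
def pathEnd : (G : DiGraph) → G.V → List G.E → G.V
  | _, v, [] => v
  | G, _, e :: es => G.pathEnd (G.r e) es

/-- The set of vertices on a path `l` starting at `v`. -/
def pathVerts (v : G.V) (l : List G.E) : Set G.V := insert v {w | ∃ e ∈ l, G.r e = w}

/-- A cycle based at `v` : a nonempty closed path in which distinct edges have
distinct sources. -/
def IsCycle (v : G.V) (l : List G.E) : Prop :=
  l ≠ [] ∧ G.IsPathFrom v l ∧ G.pathEnd v l = v ∧ (l.map G.s).Nodup

/-- A cycle is exclusive if no vertex on it is the base of a cycle distinct from it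
(cycles being identified with their sets of edges). -/
def ExclusiveCycle (v : G.V) (l : List G.E) : Prop :=
  G.IsCycle v l ∧ ∀ u ∈ G.pathVerts v l, ∀ m, G.IsCycle u m → (∀ e, e ∈ m ↔ e ∈ l)

/-- The set `B_H` of infinite emitters outside `H` which emit a nonzero finite
number of edges into `E⁰ − H`. -/
def BH (H : Set G.V) : Set G.V :=
  {v | v ∉ H ∧ (G.s ⁻¹' {v}).Infinite ∧
    {e | G.s e = v ∧ G.r e ∉ H}.Nonempty ∧ {e | G.s e = v ∧ G.r e ∉ H}.Finite}

/-- The quotient graph `E/(H,S)` of an admissible pair `(H, S)` with `H` hereditary. -/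
def quotGraph (H : Set G.V) (hH : G.Hereditary H) (S : Set G.V) : DiGraph where
  V := {v : G.V // v ∉ H} ⊕ {v : G.V // v ∈ G.BH H \ S}
  E := {e : G.E // G.r e ∉ H} ⊕ {e : G.E // G.r e ∈ G.BH H \ S}
  s := fun e =>
    match e with
    | .inl e => .inl ⟨G.s e.1, fun h =>
        e.2 (hH _ h _ (Relation.ReflTransGen.single ⟨e.1, rfl, rfl⟩))⟩
    | .inr e => .inl ⟨G.s e.1, fun h =>
        e.2.1.1 (hH _ h _ (Relation.ReflTransGen.single ⟨e.1, rfl, rfl⟩))⟩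
  r := fun e =>
    match e with
    | .inl e => .inl ⟨G.r e.1, e.2⟩
    | .inr e => .inr ⟨G.r e.1, e.2⟩

section Helpers

variable {G : DiGraph} {H : Set G.V} {hher : G.Hereditary H} {S : Set G.V}

/-- Projection from the quotient graph's vertices back to `G.V`. -/
def toV : (G.quotGraph H hher S).V → G.V := Sum.elim Subtype.val Subtype.val

lemma reach_toV {q₁ q₂ : (G.quotGraph H hher S).V}
    (h : (G.quotGraph H hher S).Reach q₁ q₂) : G.Reach (toV q₁) (toV q₂) := by
  induction h with
  | refl => exact .refl
  | tail _ step ih =>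
    obtain ⟨e, hs, hr⟩ := step
    refine ih.tail ?_
    cases e with
    | inl e => exact ⟨e.1, by rw [← hs]; rfl, by rw [← hr]; rfl⟩
    | inr e => exact ⟨e.1, by rw [← hs]; rfl, by rw [← hr]; rfl⟩

lemma reach_inl {u : G.V} (hu : u ∉ H) {w : G.V} (h : G.Reach u w) (hw : w ∉ H) :
    (G.quotGraph H hher S).Reach (.inl ⟨u, hu⟩) (.inl ⟨w, hw⟩) := by
  induction h with
  | refl => exact .refl
  | @tail c w h' step ih =>
    obtain ⟨e, hse, hre⟩ := step
    have hc : c ∉ H := fun hm => hw (hher _ hm _ (.single ⟨e, hse, hre⟩))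
    refine (ih hc).tail ⟨Sum.inl ⟨e, by rw [hre]; exact hw⟩, ?_, ?_⟩
    · exact congrArg Sum.inl (Subtype.ext hse)
    · exact congrArg Sum.inl (Subtype.ext hre)

lemma inr_sink {v : {v : G.V // v ∈ G.BH H \ S}} {q : (G.quotGraph H hher S).V}
    (h : (G.quotGraph H hher S).Reach (.inr v) q) : q = .inr v := by
  rcases h.cases_head with rfl | ⟨c, ⟨e, hs, _⟩, _⟩
  · rfl
  · cases e with
    | inl e => exact absurd hs (by simp [quotGraph])
    | inr e => exact absurd hs (by simp [quotGraph])

lemma exists_edge_into {u : G.V} (hu : u ∈ G.BH H) (hroot : Hᶜ = G.root {u}) :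
    ∃ f, G.r f = u ∧ G.Reach u (G.s f) := by
  obtain ⟨e₀, hs₀, hr₀⟩ := hu.2.2.1
  have h : G.Reach (G.r e₀) u := by
    have : G.r e₀ ∈ G.root {u} := hroot ▸ hr₀
    obtain ⟨x, hx, hre⟩ := this
    rwa [Set.mem_singleton_iff.mp hx] at hre
  rcases h.cases_tail with heq | ⟨c, h', f, hsf, hrf⟩
  · exact ⟨e₀, heq.symm, by rw [hs₀]; exact .refl⟩
  · refine ⟨f, hrf, ?_⟩
    rw [hsf]
    exact (Relation.ReflTransGen.single ⟨e₀, hs₀, rfl⟩).trans h'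

lemma reach_inr {u : G.V} (hu : u ∈ G.BH H) (hroot : Hᶜ = G.root {u})
    (hu' : u ∈ G.BH H \ S) {w : G.V} (hw : w ∉ H) :
    (G.quotGraph H hher S).Reach (.inl ⟨w, hw⟩) (.inr ⟨u, hu'⟩) := by
  obtain ⟨f, hrf, hreach⟩ := exists_edge_into hu hroot
  have hwu : G.Reach w u := by
    have : w ∈ G.root {u} := hroot ▸ hw
    obtain ⟨x, hx, h⟩ := this
    rwa [Set.mem_singleton_iff.mp hx] at h
  have hsf : G.s f ∉ H := fun hm => hu.1 (hher _ hm _ (.single ⟨f, rfl, hrf⟩))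
  refine (reach_inl hw (hwu.trans hreach) hsf).tail
    ⟨Sum.inr ⟨f, by rw [hrf]; exact hu'⟩, ?_, ?_⟩
  · exact congrArg Sum.inl (Subtype.ext rfl)
  · exact congrArg Sum.inr (Subtype.ext hrf)

end Helpers

/-- For an admissible pair `(H, S)`, the set `E⁰ − H` is downwards directed with ICSP
and `S` is `B_H` or `B_H − {u}` with `E⁰ − H = R(u)`, if and only if the vertex set of
the quotient graph `E/(H,S)` is downwards directed and has CSP. -/
theorem quotient_graph_downDirected_CSP_iff (G : DiGraph) (H : Set G.V)
    (hher : G.Hereditary H) (hsat : G.Saturated H) (S : Set G.V) (hS : S ⊆ G.BH H) :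
    (G.DownDirected Hᶜ ∧ G.ICSP Hᶜ ∧
      (S = G.BH H ∨ ∃ u ∈ G.BH H, S = G.BH H \ {u} ∧ Hᶜ = G.root {u})) ↔
    ((G.quotGraph H hher S).DownDirected Set.univ ∧
      (G.quotGraph H hher S).CSP Set.univ) := by
  constructor
  · rintro ⟨hdd, ⟨C, hCc, hCsub, hCroot⟩, hScase⟩
    -- key facts about `B_H \ S`
    have hone : ∀ v ∈ G.BH H \ S, ∃ hu : v ∈ G.BH H, Hᶜ = G.root {v} := by
      rcases hScase with rfl | ⟨u, huB, rfl, hroot⟩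
      · rintro v ⟨hv1, hv2⟩; exact absurd hv1 hv2
      · rintro v ⟨hv1, hv2⟩
        have : v = u := by
          by_contra hne
          exact hv2 ⟨hv1, hne⟩
        subst this
        exact ⟨hv1, hroot⟩
    have huniq : ∀ v ∈ G.BH H \ S, ∀ v' ∈ G.BH H \ S, v = v' := by
      rcases hScase with rfl | ⟨u, huB, rfl, hroot⟩
      · rintro v ⟨hv1, hv2⟩; exact absurd hv1 hv2
      · rintro v ⟨hv1, hv2⟩ v' ⟨hv1', hv2'⟩
        have h1 : v = u := by by_contra hne; exact hv2 ⟨hv1, hne⟩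
        have h2 : v' = u := by by_contra hne; exact hv2' ⟨hv1', hne⟩
        rw [h1, h2]
    constructor
    · -- down directed
      rintro (⟨u, hu⟩ | ⟨v, hv⟩) - (⟨w, hw⟩ | ⟨v', hv'⟩) -
      · obtain ⟨x, hx, hux, hwx⟩ := hdd u hu w hw
        exact ⟨.inl ⟨x, hx⟩, trivial, reach_inl hu hux hx, reach_inl hw hwx hx⟩
      · obtain ⟨hvB, hroot⟩ := hone v' hv'
        exact ⟨.inr ⟨v', hv'⟩, trivial, reach_inr hvB hroot hv' hu, .refl⟩
      · obtain ⟨hvB, hroot⟩ := hone v hv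
        exact ⟨.inr ⟨v, hv⟩, trivial, .refl, reach_inr hvB hroot hv hw⟩
      · obtain ⟨hvB, hroot⟩ := hone v hv
        obtain ⟨hvB', hroot'⟩ := hone v' hv'
        have : v' = v := huniq v' hv' v hv
        subst this
        exact ⟨.inr ⟨v', hv'⟩, trivial, .refl, .refl⟩
    · -- CSP
      refine ⟨Sum.inl '' {x : {v : G.V // v ∉ H} | x.1 ∈ C} ∪ Set.range Sum.inr,
        ?_, ?_⟩
      · refine Set.Countable.union (Set.Countable.image ?_ _) ?_
        · exact (hCc.preimage Subtype.val_injective)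
        · refine Set.Subsingleton.countable ?_
          rintro _ ⟨x, rfl⟩ _ ⟨y, rfl⟩
          obtain ⟨hxB, hrx⟩ := hone x.1 x.2
          obtain ⟨hyB, hry⟩ := hone y.1 y.2
          have : x.1 = y.1 := huniq x.1 x.2 y.1 y.2
          exact congrArg Sum.inr (Subtype.ext this)
      · rintro (⟨w, hw⟩ | ⟨v, hv⟩) -
        · obtain ⟨c, hc, hwc⟩ := hCroot hw
          exact ⟨.inl ⟨c, hCsub hc⟩, Or.inl ⟨⟨c, hCsub hc⟩, hc, rfl⟩,
            reach_inl hw hwc (hCsub hc)⟩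
        · exact ⟨.inr ⟨v, hv⟩, Or.inr ⟨⟨v, hv⟩, rfl⟩, .refl⟩
  · rintro ⟨hdd, C', hC'c, hC'root⟩
    have hsub : ∀ q : (G.quotGraph H hher S).V, toV q ∈ Hᶜ := by
      rintro (⟨v, hv⟩ | ⟨v, hv⟩)
      · exact hv
      · exact hv.1.1
    refine ⟨?_, ⟨toV '' C', hC'c.image _, ?_, ?_⟩, ?_⟩
    · intro u hu w hw
      obtain ⟨q, -, h1, h2⟩ := hdd (.inl ⟨u, hu⟩) trivial (.inl ⟨w, hw⟩) trivial
      exact ⟨toV q, hsub q, reach_toV h1, reach_toV h2⟩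
    · rintro _ ⟨q, -, rfl⟩; exact hsub q
    · intro w hw
      obtain ⟨q, hq, hr⟩ := hC'root (Set.mem_univ (Sum.inl ⟨w, hw⟩))
      exact ⟨toV q, ⟨q, hq, rfl⟩, reach_toV hr⟩
    · rcases Set.eq_empty_or_nonempty (G.BH H \ S) with hemp | ⟨u, hu⟩
      · exact Or.inl (Set.Subset.antisymm hS (Set.diff_eq_empty.mp hemp))
      · refine Or.inr ⟨u, hu.1, ?_, ?_⟩
        · ext v
          simp only [Set.mem_diff, Set.mem_singleton_iff]
          constructor
          · intro hv
            refine ⟨hS hv, fun hvu => ?_⟩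
            subst hvu
            exact hu.2 hv
          · rintro ⟨hvB, hvne⟩
            by_contra hvS
            obtain ⟨q, -, h1, h2⟩ := hdd (.inr ⟨v, hvB, hvS⟩) trivial
              (.inr ⟨u, hu⟩) trivial
            rw [inr_sink h1] at h2
            have := inr_sink h2
            exact hvne (congrArg toV this)
        · ext w
          simp only [Set.mem_compl_iff, root, Set.mem_setOf_eq,
            Set.mem_singleton_iff, exists_eq_left]
          constructor
          · intro hw
            obtain ⟨q, -, h1, h2⟩ := hdd (.inl ⟨w, hw⟩) trivial
              (.inr ⟨u, hu⟩) trivial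
            rw [inr_sink h2] at h1
            exact reach_toV h1
          · intro hwu hwH
            exact hu.1.1 (hher _ hwH _ hwu)

end DiGraph
end

section
/- Let E be a directed graph with an exclusive cycle c and v a vertex on c. Let Y be the set of formal elements pq* with p, q paths in E, r(p) = r(q) ∈ c⁰, and s(q) = v. Then in any element pq* ∈ Y the path q lies entirely in the cycle c. -/
namespace DiGraph

variable (G : DiGraph)

open Classical in
/-- Auxiliary reduction on reversed edge lists: cancel common initial segments. -/
noncomputable def redAux (G : DiGraph) : List G.E → List G.E → List G.E × List G.E
  | a :: as, b :: bs => if a = b then redAux G as bs else (a :: as, b :: bs)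
  | as, bs => (as, bs)

/-- The reduction function: `red (p, q)` cancels the common final edges of the
paths `p` and `q`, implementing `red(ee*q*) = q*` and `red(pee*q*) = red(pq*)`. -/
noncomputable def red (p q : List G.E) : List G.E × List G.E :=
  ((G.redAux p.reverse q.reverse).1.reverse, (G.redAux p.reverse q.reverse).2.reverse)

/-- The source vertex of an element `pq*` (with `q` a path starting at the base
vertex `v`): the source of `p` if `p` is nonempty, and `r(q)` otherwise. -/
def startVtx (v : G.V) : List G.E × List G.E → G.V
  | ([], q) => G.pathEnd v q
  | (e :: _, _) => G.s e

/-- Membership in the set `Y` associated to a cycle `c` (based at `cv`, with edges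
`cl`) and a vertex `v ∈ c⁰`: pairs `(p, q)` of paths with `r(p) = r(q) ∈ c⁰` and
`s(q) = v`. -/
def MemY (cv : G.V) (cl : List G.E) (v : G.V) (x : List G.E × List G.E) : Prop :=
  G.IsPathFrom (G.startVtx v x) x.1 ∧ G.IsPathFrom v x.2 ∧
    G.pathEnd (G.startVtx v x) x.1 = G.pathEnd v x.2 ∧
    G.pathEnd v x.2 ∈ G.pathVerts cv cl

/-- The degree `|p| − |q|` of an element `pq*`. -/
def degOf (G : DiGraph) (x : List G.E × List G.E) : ℤ :=
  (x.1.length : ℤ) - (x.2.length : ℤ)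

/-- The branching system `X`: reduced elements of `Y`. -/
def Xset (cv : G.V) (cl : List G.E) (v : G.V) : Set (List G.E × List G.E) :=
  {x | G.MemY cv cl v x ∧ G.red x.1 x.2 = x}

/-- The subset `X_w` of `X` of elements with source vertex `w`. -/
def Xvtx (cv : G.V) (cl : List G.E) (v : G.V) (w : G.V) : Set (List G.E × List G.E) :=
  {x ∈ G.Xset cv cl v | G.startVtx v x = w}

/-- The subset `X_e` of `X` of elements of the form `red(e r s*)` with `e r s* ∈ Y`. -/
def Xedge (cv : G.V) (cl : List G.E) (v : G.V) (e : G.E) : Set (List G.E × List G.E) :=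
  {x | ∃ rs : List G.E × List G.E, G.MemY cv cl v (e :: rs.1, rs.2) ∧
    x = G.red (e :: rs.1) rs.2}

/-- The map `σ_e : X_{r(e)} → X_e`, `pq* ↦ red(e p q*)`. -/
noncomputable def sigmaE (e : G.E) (x : List G.E × List G.E) : List G.E × List G.E :=
  G.red (e :: x.1) x.2

variable {G}

theorem _root_.List.exists_split_of_not_nodup_map {α β : Type*} (f : α → β) {l : List α}
    (h : ¬ (l.map f).Nodup) : ∃ a x b y c, l = a ++ x :: b ++ y :: c ∧ f x = f y := by
  induction l with
  | nil => simp at h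
  | cons z t ih =>
    rw [List.map_cons, List.nodup_cons, not_and_or, not_not] at h
    rcases h with hmem | ht
    · obtain ⟨y, hy, hyz⟩ := List.mem_map.mp hmem
      obtain ⟨b, c, rfl⟩ := List.append_of_mem hy
      exact ⟨[], z, b, y, c, rfl, hyz.symm⟩
    · obtain ⟨a, x, b, y, c, rfl, hxy⟩ := ih ht
      exact ⟨z :: a, x, b, y, c, rfl, hxy⟩

@[simp] lemma pathEnd_nil (v : G.V) : G.pathEnd v [] = v := by rw [pathEnd]

@[simp] lemma pathEnd_cons (v : G.V) (e : G.E) (l : List G.E) :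
    G.pathEnd v (e :: l) = G.pathEnd (G.r e) l := by rw [pathEnd]

@[simp] lemma isPathFrom_nil (v : G.V) : G.IsPathFrom v [] := by
  rw [IsPathFrom]; trivial

@[simp] lemma isPathFrom_cons {v : G.V} {e : G.E} {l : List G.E} :
    G.IsPathFrom v (e :: l) ↔ G.s e = v ∧ G.IsPathFrom (G.r e) l := by
  rw [IsPathFrom]

@[simp] lemma pathEnd_append (v : G.V) (l₁ l₂ : List G.E) :
    G.pathEnd v (l₁ ++ l₂) = G.pathEnd (G.pathEnd v l₁) l₂ := by
  induction l₁ generalizing v with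
  | nil => simp
  | cons e l ih => simp [ih]

@[simp] lemma isPathFrom_append {v : G.V} {l₁ l₂ : List G.E} :
    G.IsPathFrom v (l₁ ++ l₂) ↔ G.IsPathFrom v l₁ ∧ G.IsPathFrom (G.pathEnd v l₁) l₂ := by
  induction l₁ generalizing v with
  | nil => simp
  | cons e l ih => simp [ih, and_assoc]

lemma pathEnd_eq_s_of_isPathFrom_append_cons {v : G.V} {l c : List G.E} {g : G.E}
    (h : G.IsPathFrom v (l ++ g :: c)) : G.pathEnd v l = G.s g :=
  ((isPathFrom_append.mp h).2 |> isPathFrom_cons.mp).1.symm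

lemma isPathFrom_append_of_loop {v : G.V} {a m r : List G.E}
    (h : G.IsPathFrom v (a ++ m ++ r)) (hm : G.pathEnd (G.pathEnd v a) m = G.pathEnd v a) :
    G.IsPathFrom v (a ++ r) ∧ G.pathEnd v (a ++ r) = G.pathEnd v (a ++ m ++ r) := by
  simp_all

lemma exists_prefix_pathEnd_eq {v w : G.V} {l : List G.E} (hw : w ∈ G.pathVerts v l) :
    ∃ a b, l = a ++ b ∧ G.pathEnd v a = w := by
  rcases hw with rfl | ⟨e, he, rfl⟩
  · exact ⟨[], l, rfl, by simp⟩
  · obtain ⟨a, b, rfl⟩ := List.append_of_mem he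
    exact ⟨a ++ [e], b, by simp, by simp⟩

lemma IsCycle.exists_path {cv : G.V} {cl : List G.E} (hc : G.IsCycle cv cl)
    {u w : G.V} (hu : u ∈ G.pathVerts cv cl) (hw : w ∈ G.pathVerts cv cl) :
    ∃ t, G.IsPathFrom u t ∧ G.pathEnd u t = w := by
  obtain ⟨a, b, rfl, rfl⟩ := exists_prefix_pathEnd_eq hu
  obtain ⟨a', b', hab, rfl⟩ := exists_prefix_pathEnd_eq hw
  obtain ⟨-, hpath, hclosed, -⟩ := hc
  have ha' : G.IsPathFrom cv a' := (isPathFrom_append.mp (hab ▸ hpath)).1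
  rw [isPathFrom_append] at hpath
  rw [pathEnd_append] at hclosed
  exact ⟨b ++ a', isPathFrom_append.mpr ⟨hpath.2, by rwa [hclosed]⟩, by simp [hclosed]⟩

/-- A repeated source on the walk either closes a shorter closed walk that starts with `e`,
or bounds a detour that can be cut out. -/
lemma exists_isCycle_of_closed {v : G.V} {e : G.E} {l : List G.E}
    (hp : G.IsPathFrom v (e :: l)) (hclosed : G.pathEnd v (e :: l) = v) :
    ∃ m, G.IsCycle v m ∧ e ∈ m := by
  induction hn : l.length using Nat.strong_induction_on generalizing l with
  | _ n ih =>
  by_cases hnd : ((e :: l).map G.s).Nodup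
  · exact ⟨e :: l, ⟨List.cons_ne_nil _ _, hp, hclosed, hnd⟩, List.mem_cons_self⟩
  obtain ⟨a, f, b, g, c, hsplit, hfg⟩ := List.exists_split_of_not_nodup_map G.s hnd
  cases a with
  | nil =>
    obtain ⟨rfl, rfl⟩ : e = f ∧ l = b ++ g :: c := by simpa using hsplit
    have hg := pathEnd_eq_s_of_isPathFrom_append_cons (l := e :: b) hp
    refine ih b.length (by simp [← hn]) ((isPathFrom_append (l₁ := e :: b)).mp hp).1 ?_ rfl
    rw [hg, ← hfg, (isPathFrom_cons.mp hp).1]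
  | cons e' a =>
    obtain ⟨rfl, rfl⟩ : e = e' ∧ l = a ++ f :: b ++ g :: c := by simpa using hsplit
    have hf := pathEnd_eq_s_of_isPathFrom_append_cons (l := e :: a)
      (by simpa only [List.cons_append, List.append_assoc] using hp)
    have hg := pathEnd_eq_s_of_isPathFrom_append_cons (l := e :: a ++ f :: b) hp
    obtain ⟨hp', hclosed'⟩ := isPathFrom_append_of_loop (a := e :: a) (m := f :: b)
      (r := g :: c) hp (by rw [← pathEnd_append, hg, hf, hfg])
    exact ih (a ++ g :: c).length (by simp [← hn]) hp' (hclosed'.trans hclosed) rfl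

lemma ExclusiveCycle.mem_of_isPathFrom {cv : G.V} {cl : List G.E} (hc : G.ExclusiveCycle cv cl)
    {v : G.V} (hv : v ∈ G.pathVerts cv cl) {q : List G.E} (hq : G.IsPathFrom v q)
    (hend : G.pathEnd v q ∈ G.pathVerts cv cl) : ∀ e ∈ q, e ∈ cl := by
  induction q generalizing v with
  | nil => simp
  | cons e q ih =>
    rw [isPathFrom_cons] at hq
    rw [pathEnd_cons] at hend
    obtain ⟨t, ht, hte⟩ := hc.1.exists_path hend hv
    obtain ⟨m, hm, hem⟩ := exists_isCycle_of_closed (v := v) (e := e) (l := q ++ t)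
      (by simp [hq, ht]) (by simp [hte])
    have he : e ∈ cl := (hc.2 v hv m hm e).1 hem
    rintro f (_ | ⟨_, hf⟩)
    · exact he
    · exact ih (Or.inr ⟨e, he, rfl⟩) hq.2 hend f hf

/-- In any element `pq* ∈ Y` associated to an exclusive cycle `c` and `v ∈ c⁰`,
the path `q` lies entirely in `c`. -/
theorem memY_snd_subset_cycle (G : DiGraph) (cv : G.V) (cl : List G.E)
    (hc : G.ExclusiveCycle cv cl) (v : G.V) (hv : v ∈ G.pathVerts cv cl)
    (x : List G.E × List G.E) (hx : G.MemY cv cl v x) :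
    ∀ e ∈ x.2, e ∈ cl :=
  hc.mem_of_isPathFrom hv hx.2.1 hx.2.2.2

end DiGraph
end

section
/- Let c be an exclusive cycle in a directed graph E, v a vertex of c, Y the set of elements pq* with p, q paths, r(p) = r(q) ∈ c⁰, s(q) = v, and red: Y → Y the reduction function defined recursively by red(ee*q*) = q* and red(pee*q*) = red(pq*) for edges e of c, fixing already-reduced elements. Then for every pq* ∈ Y and every edge e ∈ E¹ with s(p) = r(e), red(e·red(pq*)) = red(e p q*). -/
namespace DiGraph

variable (G : DiGraph)

theorem redAux_nil_right (G : DiGraph) (p : List G.E) : G.redAux p [] = (p, []) := by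
  cases p <;> simp [redAux]

theorem redAux_append (G : DiGraph) (e : G.E) :
    ∀ p q : List G.E,
      G.redAux ((G.redAux p q).1 ++ [e]) (G.redAux p q).2 = G.redAux (p ++ [e]) q
  | [], q => by simp [redAux]
  | a :: as, [] => by simp [redAux_nil_right]
  | a :: as, b :: bs => by
    by_cases h : a = b
    · simpa [redAux, h] using redAux_append G e as bs
    · simp [redAux, h]

/-- For `pq* ∈ Y` and an edge `e` with `s(p) = r(e)`:
`red(e · red(pq*)) = red(e p q*)`. -/
theorem red_cons_red (G : DiGraph) (cv : G.V) (cl : List G.E)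
    (hc : G.ExclusiveCycle cv cl) (v : G.V) (hv : v ∈ G.pathVerts cv cl)
    (x : List G.E × List G.E) (hx : G.MemY cv cl v x)
    (e : G.E) (he : G.r e = G.startVtx v x) :
    G.red (e :: (G.red x.1 x.2).1) (G.red x.1 x.2).2 = G.red (e :: x.1) x.2 := by
  have key := G.redAux_append e x.1.reverse x.2.reverse
  simp only [red, List.reverse_cons, List.reverse_reverse, key]

end DiGraph
end
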